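/- The translation from PCF to HEPCF preserves typing: if Γ ⊢ V : T in PCF then ⟦Γ⟧ ⊢ ⟦V⟧ : ⟦T⟧, and if Γ ⊢ C : T then ⟦Γ⟧ ⊢_E ⟦C⟧ : ⟦T⟧, where E = {σ : Unit ⇝ 1}, ⟦Nat⟧ = Unit →_E Unit, and ⟦T → U⟧ = ⟦T⟧ →_E ⟦U⟧. -/

import Mathlib

/-! HEPCF: EPCF extended with effect handlers. A handler consists of a return
clause `Cr` (binding the returned value, de Bruijn index 0) and, for each
operation `σ`, a clause `Hop σ` binding the parameter `x` (index 1) and the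
continuation `r` (index 0). -/

namespace HEPCF

mutual
/-- HEPCF values (de Bruijn representation). -/
inductive HVal (CV Op : Type) : Type
  | cv : CV → HVal CV Op
  | num : ℕ → ℕ → HVal CV Op
  | var : ℕ → HVal CV Op
  | lam : HComp CV Op → HVal CV Op
  | fixv : HVal CV Op → HVal CV Op
/-- HEPCF computations (de Bruijn representation). -/
inductive HComp (CV Op : Type) : Type
  | app : HVal CV Op → HVal CV Op → HComp CV Op
  | ret : HVal CV Op → HComp CV Op
  | letin : HComp CV Op → HComp CV Op → HComp CV Op
  | opc : Op → HVal CV Op → HComp CV Op → HComp CV Op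
  | case : (k : ℕ) → HVal CV Op → (Fin k → HComp CV Op) → HComp CV Op
  | handle : HComp CV Op → (Op → HComp CV Op) → HComp CV Op → HComp CV Op
end

variable {CV Op : Type}

/-- Lifting of a renaming under a binder. -/
def upr (ρ : ℕ → ℕ) : ℕ → ℕ
  | 0 => 0
  | n + 1 => ρ n + 1

mutual
/-- Renaming of variables in values. -/
def renV (ρ : ℕ → ℕ) : HVal CV Op → HVal CV Op
  | .cv v => .cv v
  | .num n k => .num n k
  | .var n => .var (ρ n)
  | .lam C => .lam (renC (upr ρ) C)
  | .fixv V => .fixv (renV (upr ρ) V)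
/-- Renaming of variables in computations. -/
def renC (ρ : ℕ → ℕ) : HComp CV Op → HComp CV Op
  | .app V W => .app (renV ρ V) (renV ρ W)
  | .ret V => .ret (renV ρ V)
  | .letin C B => .letin (renC ρ C) (renC (upr ρ) B)
  | .opc σ V C => .opc σ (renV ρ V) (renC (upr ρ) C)
  | .case k V Cs => .case k (renV ρ V) (fun i => renC ρ (Cs i))
  | .handle Cr Hop C =>
      .handle (renC (upr ρ) Cr) (fun σ => renC (upr (upr ρ)) (Hop σ)) (renC ρ C)
end

/-- Lifting of a substitution under a binder. -/
def upsH (σ : ℕ → HVal CV Op) : ℕ → HVal CV Op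
  | 0 => .var 0
  | n + 1 => renV Nat.succ (σ n)

mutual
/-- Simultaneous substitution of values for variables, in values. -/
def subV (σ : ℕ → HVal CV Op) : HVal CV Op → HVal CV Op
  | .cv v => .cv v
  | .num n k => .num n k
  | .var n => σ n
  | .lam C => .lam (subC (upsH σ) C)
  | .fixv V => .fixv (subV (upsH σ) V)
/-- Simultaneous substitution of values for variables, in computations. -/
def subC (σ : ℕ → HVal CV Op) : HComp CV Op → HComp CV Op
  | .app V W => .app (subV σ V) (subV σ W)
  | .ret V => .ret (subV σ V)
  | .letin C B => .letin (subC σ C) (subC (upsH σ) B)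
  | .opc op V C => .opc op (subV σ V) (subC (upsH σ) C)
  | .case k V Cs => .case k (subV σ V) (fun i => subC σ (Cs i))
  | .handle Cr Hop C =>
      .handle (subC (upsH σ) Cr) (fun op => subC (upsH (upsH σ)) (Hop op))
        (subC σ C)
end

/-- Substitution `C[W/x]` of the value `W` for the variable `0`. -/
def subst0C (W : HVal CV Op) (C : HComp CV Op) : HComp CV Op :=
  subC (fun n => match n with | 0 => W | n + 1 => .var n) C

/-- Substitution `V[W/x]` of the value `W` for the variable `0`. -/
def subst0V (W : HVal CV Op) (V : HVal CV Op) : HVal CV Op :=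
  subV (fun n => match n with | 0 => W | n + 1 => .var n) V

/-- The simultaneous substitution `[r := A, x := B]` used when a handler
catches an operation (`r` is the innermost bound variable). -/
def sub2 (A B : HVal CV Op) : ℕ → HVal CV Op
  | 0 => A
  | 1 => B
  | n + 2 => .var n

/-- The value `λy. handle H C` passed as the captured continuation when the
handler `H = (Cr, Hop)` catches an operation with continuation `C`. -/
def contVal (Cr : HComp CV Op) (Hop : Op → HComp CV Op) (C : HComp CV Op) :
    HVal CV Op :=
  .lam (.handle (renC (upr Nat.succ) Cr)
    (fun σ => renC (upr (upr Nat.succ)) (Hop σ)) C)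

/-- The reduction relation of HEPCF. -/
inductive HStep : HComp CV Op → HComp CV Op → Prop
  | beta (C : HComp CV Op) (W : HVal CV Op) :
      HStep (.app (.lam C) W) (subst0C W C)
  | fix (V W : HVal CV Op) :
      HStep (.app (.fixv V) W) (.app (subst0V (.fixv V) V) W)
  | case {n k : ℕ} (h : n < k) (Cs : Fin k → HComp CV Op) :
      HStep (.case k (.num n k) Cs) (Cs ⟨n, h⟩)
  | letRet (V : HVal CV Op) (C : HComp CV Op) :
      HStep (.letin (.ret V) C) (subst0C V C)
  | letCong {C C' : HComp CV Op} (B : HComp CV Op) :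
      HStep C C' → HStep (.letin C B) (.letin C' B)
  | letOp (σ : Op) (V : HVal CV Op) (C D : HComp CV Op) :
      HStep (.letin (.opc σ V C) D) (.opc σ V (.letin C (renC (upr Nat.succ) D)))
  | hCong {C C' : HComp CV Op} (Cr : HComp CV Op) (Hop : Op → HComp CV Op) :
      HStep C C' → HStep (.handle Cr Hop C) (.handle Cr Hop C')
  | hRet (Cr : HComp CV Op) (Hop : Op → HComp CV Op) (V : HVal CV Op) :
      HStep (.handle Cr Hop (.ret V)) (subst0C V Cr)
  | hOp (Cr : HComp CV Op) (Hop : Op → HComp CV Op) (σ : Op)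
      (V : HVal CV Op) (C : HComp CV Op) :
      HStep (.handle Cr Hop (.opc σ V C))
        (subC (sub2 (contVal Cr Hop C) V) (Hop σ))

end HEPCF

namespace HEPCF

/-- HEPCF types: base types, enumeration types, and effect-annotated arrows
`T →_E U` where `E` is a set of operations. -/
inductive HTy (BV Op : Type) : Type
  | base : BV → HTy BV Op
  | enum : ℕ → HTy BV Op
  | arr : HTy BV Op → Set Op → HTy BV Op → HTy BV Op

section Typing

variable {BV CV Op : Type} (cvTy : CV → BV) (opPar : Op → BV) (opAr : Op → ℕ)

mutual
/-- Typing judgment for HEPCF values. -/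
inductive HVTy : List (HTy BV Op) → HVal CV Op → HTy BV Op → Prop
  | cv {Γ} (v : CV) : HVTy Γ (.cv v) (.base (cvTy v))
  | num {Γ n k} : n < k → HVTy Γ (.num n k) (.enum k)
  | var {Γ n T} : Γ[n]? = some T → HVTy Γ (.var n) T
  | lam {Γ C T E U} : HCTy (T :: Γ) E C U → HVTy Γ (.lam C) (.arr T E U)
  | fixv {Γ V T E U} : HVTy ((HTy.arr T E U) :: Γ) V (.arr T E U) →
      HVTy Γ (.fixv V) (.arr T E U)
/-- Typing judgment `Γ ⊢_E C : T` for HEPCF computations. The rule for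
`handle` types the return clause and the clauses for the handled operations
`E'` (the clause for `σᵢ` binds the parameter `x : Bᵢ` and the continuation
`r : kᵢ →_E T`). -/
inductive HCTy : List (HTy BV Op) → Set Op → HComp CV Op → HTy BV Op → Prop
  | app {Γ E V W T U} : HVTy Γ V (.arr T E U) → HVTy Γ W T →
      HCTy Γ E (.app V W) U
  | ret {Γ E V T} : HVTy Γ V T → HCTy Γ E (.ret V) T
  | letin {Γ E C B T U} : HCTy Γ E C T → HCTy (T :: Γ) E B U →
      HCTy Γ E (.letin C B) U
  | opc {Γ E σ V C T} : σ ∈ E → HVTy Γ V (.base (opPar σ)) →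
      HCTy ((HTy.enum (opAr σ)) :: Γ) E C T → HCTy Γ E (.opc σ V C) T
  | case {Γ E k V T} {Cs : Fin k → HComp CV Op} : HVTy Γ V (.enum k) →
      (∀ i, HCTy Γ E (Cs i) T) → HCTy Γ E (.case k V Cs) T
  | handle {Γ E C Cr Hop T U} {E' : Set Op} :
      HCTy Γ E' C U →
      HCTy (U :: Γ) E Cr T →
      (∀ σ ∈ E',
        HCTy ((HTy.arr (.enum (opAr σ)) E T) :: (HTy.base (opPar σ)) :: Γ)
          E (Hop σ) T) →
      HCTy Γ E (.handle Cr Hop C) T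
end

end Typing

end HEPCF

/-! Plotkin's PCF, in fine-grained call-by-value form.
The `case` construct is annotated with the common type of its branches. -/

namespace PCF

/-- PCF types: natural numbers and arrows. -/
inductive PTy : Type
  | nat : PTy
  | arr : PTy → PTy → PTy

mutual
/-- PCF values (de Bruijn representation). -/
inductive PVal : Type
  | zero : PVal
  | succ : PVal → PVal
  | var : ℕ → PVal
  | lam : PComp → PVal
  | fixp : PVal → PVal
/-- PCF computations. `pcase T V C D` is `case(V; 0 ↦ C; succ(n) ↦ D)` where
`D` binds `n` and both branches have type `T`. -/
inductive PComp : Type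
  | app : PVal → PVal → PComp
  | ret : PVal → PComp
  | letin : PComp → PComp → PComp
  | pcase : PTy → PVal → PComp → PComp → PComp
end

/-- Lifting of a renaming under a binder. -/
def upr (ρ : ℕ → ℕ) : ℕ → ℕ
  | 0 => 0
  | n + 1 => ρ n + 1

mutual
/-- Renaming of variables in PCF values. -/
def renV (ρ : ℕ → ℕ) : PVal → PVal
  | .zero => .zero
  | .succ V => .succ (renV ρ V)
  | .var n => .var (ρ n)
  | .lam C => .lam (renC (upr ρ) C)
  | .fixp V => .fixp (renV (upr ρ) V)
/-- Renaming of variables in PCF computations. -/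
def renC (ρ : ℕ → ℕ) : PComp → PComp
  | .app V W => .app (renV ρ V) (renV ρ W)
  | .ret V => .ret (renV ρ V)
  | .letin C B => .letin (renC ρ C) (renC (upr ρ) B)
  | .pcase T V C D => .pcase T (renV ρ V) (renC ρ C) (renC (upr ρ) D)
end

/-- Lifting of a substitution under a binder. -/
def upsP (σ : ℕ → PVal) : ℕ → PVal
  | 0 => .var 0
  | n + 1 => renV Nat.succ (σ n)

mutual
/-- Simultaneous substitution in PCF values. -/
def subV (σ : ℕ → PVal) : PVal → PVal
  | .zero => .zero
  | .succ V => .succ (subV σ V)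
  | .var n => σ n
  | .lam C => .lam (subC (upsP σ) C)
  | .fixp V => .fixp (subV (upsP σ) V)
/-- Simultaneous substitution in PCF computations. -/
def subC (σ : ℕ → PVal) : PComp → PComp
  | .app V W => .app (subV σ V) (subV σ W)
  | .ret V => .ret (subV σ V)
  | .letin C B => .letin (subC σ C) (subC (upsP σ) B)
  | .pcase T V C D => .pcase T (subV σ V) (subC σ C) (subC (upsP σ) D)
end

/-- Substitution of `W` for the variable `0` in a computation. -/
def subst0C (W : PVal) (C : PComp) : PComp :=
  subC (fun n => match n with | 0 => W | n + 1 => .var n) C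

/-- Substitution of `W` for the variable `0` in a value. -/
def subst0V (W : PVal) (V : PVal) : PVal :=
  subV (fun n => match n with | 0 => W | n + 1 => .var n) V

/-- The reduction relation of PCF. -/
inductive PStep : PComp → PComp → Prop
  | beta (C : PComp) (W : PVal) : PStep (.app (.lam C) W) (subst0C W C)
  | fix (V W : PVal) :
      PStep (.app (.fixp V) W) (.app (subst0V (.fixp V) V) W)
  | letRet (V : PVal) (C : PComp) : PStep (.letin (.ret V) C) (subst0C V C)
  | letCong {C C'} (B : PComp) : PStep C C' → PStep (.letin C B) (.letin C' B)
  | caseZero (T : PTy) (C D : PComp) : PStep (.pcase T .zero C D) C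
  | caseSucc (T : PTy) (V : PVal) (C D : PComp) :
      PStep (.pcase T (.succ V) C D) (subst0C V D)

mutual
/-- Typing judgment for PCF values. -/
inductive PVTy : List PTy → PVal → PTy → Prop
  | zero {Γ} : PVTy Γ .zero .nat
  | succ {Γ V} : PVTy Γ V .nat → PVTy Γ (.succ V) .nat
  | var {Γ n T} : Γ[n]? = some T → PVTy Γ (.var n) T
  | lam {Γ C T U} : PCTy (T :: Γ) C U → PVTy Γ (.lam C) (.arr T U)
  | fixp {Γ V T U} : PVTy ((PTy.arr T U) :: Γ) V (.arr T U) →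
      PVTy Γ (.fixp V) (.arr T U)
/-- Typing judgment for PCF computations. -/
inductive PCTy : List PTy → PComp → PTy → Prop
  | app {Γ V W T U} : PVTy Γ V (.arr T U) → PVTy Γ W T →
      PCTy Γ (.app V W) U
  | ret {Γ V T} : PVTy Γ V T → PCTy Γ (.ret V) T
  | letin {Γ C B T U} : PCTy Γ C T → PCTy (T :: Γ) B U →
      PCTy Γ (.letin C B) U
  | pcase {Γ V C D T} : PVTy Γ V .nat → PCTy Γ C T →
      PCTy (PTy.nat :: Γ) D T → PCTy Γ (.pcase T V C D) T
end

/-- The PCF numeral `n`. -/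
def pnum : ℕ → PVal
  | 0 => .zero
  | n + 1 => .succ (pnum n)

end PCF

/-! The translation from PCF to (finitary) HEPCF. The HEPCF signature has a
single base type `Unit` (with single constant value `()`), and the single
operation `σ : Unit ⇝ 1`, so `CV = BV = Op = Unit`, `opAr = 1`. A natural
number `n` is represented by a thunk performing the effect `σ` exactly `n`
times and then returning `()`. -/

namespace P2H

open PCF HEPCF

/-- The base-type assignment of the signature: the only constant `()` has
type `Unit`. -/
def cvTyU : Unit → Unit := fun _ => ()

/-- The parameter type of the single operation `σ : Unit ⇝ 1`. -/
def opParU : Unit → Unit := fun _ => ()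

/-- The arity of the single operation `σ : Unit ⇝ 1`. -/
def opArU : Unit → ℕ := fun _ => 1

/-- The effect set `E = {σ : Unit ⇝ 1}` (all operations of the signature). -/
def EU : Set Unit := Set.univ

/-- Translation of PCF types: `⟦Nat⟧ = Unit →_E Unit`,
`⟦T → U⟧ = ⟦T⟧ →_E ⟦U⟧`. -/
def trTy : PTy → HTy Unit Unit
  | .nat => .arr (.base ()) EU (.base ())
  | .arr T U => .arr (trTy T) EU (trTy U)

/-- The zero value `Z_T` of an HEPCF type. -/
def Z : HTy Unit Unit → HVal Unit Unit
  | .base _ => .cv ()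
  | .enum k => .num 0 k
  | .arr _ _ U => .lam (.ret (Z U))

/-- The value `λf,g. g ()` selecting the second component of an encoded pair
of thunks. -/
def sndSel : HVal Unit Unit :=
  .lam (.ret (.lam (.app (.var 0) (.cv ()))))

/-- The zero value `Z_{Unit → Unit}`. -/
def ZUU : HVal Unit Unit := .lam (.ret (.cv ()))

/-- The return clause of the handler `H(C,D)`:
`return(V) ↦ return(λp. p Z_{Unit→Unit} (λx.⟦C⟧))` (given `⟦C⟧`). -/
def retClause (tC : HComp Unit Unit) : HComp Unit Unit :=
  .ret (.lam (.letin (.app (.var 0) ZUU)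
    (.app (.var 0) (.lam (renC (· + 4) tC)))))

/-- The `σ` clause of the handler `H(C,D)` (given `⟦D⟧` and the type `T` of
the branches):
`σ(r) ↦ let n = return(λx. let y = r 0̲ (λf,g. let z = f () in Z_{⟦T⟧})
               in return(Z_Unit))
        in return(λp. p (λx. σ(z. n ())) (λx. ⟦D⟧))`. -/
def sigClause (T : PTy) (tD : HComp Unit Unit) : HComp Unit Unit :=
  .letin
    (.ret (.lam
      (.letin
        (.letin (.app (.var 1) (.num 0 1))
          (.app (.var 0)
            (.lam (.ret (.lam
              (.letin (.app (.var 1) (.cv ())) (.ret (Z (trTy T)))))))))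
        (.ret (.cv ())))))
    (.ret (.lam
      (.letin (.app (.var 0) (.lam (.opc () (.cv ()) (.app (.var 3) (.cv ())))))
        (.app (.var 0)
          (.lam (renC (fun m => match m with | 0 => 3 | m + 1 => m + 6) tD))))))

mutual
/-- Translation of PCF values into HEPCF. -/
def trV : PVal → HVal Unit Unit
  | .zero => .lam (.ret (.cv ()))
  | .succ V => .lam (.opc () (.cv ()) (.app (renV (· + 2) (trV V)) (.cv ())))
  | .var n => .var n
  | .lam C => .lam (trC C)
  | .fixp V => .fixv (trV V)
/-- Translation of PCF computations into HEPCF. The `case` construct is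
translated as
`⟦case(V;0↦C;succ(n)↦D)⟧ = let a = (handle H(C,D) (⟦V⟧ ())) in a (λf,g. g ())`. -/
def trC : PComp → HComp Unit Unit
  | .app V W => .app (trV V) (trV W)
  | .ret V => .ret (trV V)
  | .letin C B => .letin (trC C) (trC B)
  | .pcase T V C D =>
      .letin
        (.handle (retClause (trC C)) (fun _ => sigClause T (trC D))
          (.app (trV V) (.cv ())))
        (.app (.var 0) sndSel)
end

end P2H

/-! Typing is preserved by mutual induction on PCF derivations; the translation is homomorphic
except at `succ` and `case`. For `case`, the handler `H(C,D)` folds the `σ`-operations of the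
scrutinee into a Church-encoded pair (a copy of the scrutinee, a thunk of the selected branch),
from which `sndSel` extracts the branch. The only metatheory needed is stability of HEPCF typing
under renaming, to weaken `⟦V⟧`, `⟦C⟧` and `⟦D⟧` under the binders the translation introduces. -/

namespace HEPCF

section Renaming

variable {α : Type*} {BV CV Op : Type} {cvTy : CV → BV} {opPar : Op → BV} {opAr : Op → ℕ}

def Renames (ρ : ℕ → ℕ) (Γ Δ : List α) : Prop :=
  ∀ n T, Γ[n]? = some T → Δ[ρ n]? = some T

theorem Renames.upr {ρ : ℕ → ℕ} {Γ Δ : List α} (h : Renames ρ Γ Δ) (T : α) :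
    Renames (upr ρ) (T :: Γ) (T :: Δ) := by
  rintro (_ | n) U hn
  · simpa [HEPCF.upr] using hn
  · simpa [HEPCF.upr] using h n U (by simpa using hn)

theorem renames_add_length (L Γ : List α) : Renames (· + L.length) Γ (L ++ Γ) := by
  intro n T hn
  simpa [List.getElem?_append_right] using hn

mutual
theorem HVTy.renV {Γ Δ : List (HTy BV Op)} {V : HVal CV Op} {T : HTy BV Op} {ρ : ℕ → ℕ}
    (h : HVTy cvTy opPar opAr Γ V T) (hρ : Renames ρ Γ Δ) :
    HVTy cvTy opPar opAr Δ (renV ρ V) T :=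
  match h with
  | .cv v => .cv v
  | .num hn => .num hn
  | .var hn => .var (hρ _ _ hn)
  | .lam hC => .lam (hC.renC (hρ.upr _))
  | .fixv hV => .fixv (hV.renV (hρ.upr _))

theorem HCTy.renC {Γ Δ : List (HTy BV Op)} {E : Set Op} {C : HComp CV Op} {T : HTy BV Op}
    {ρ : ℕ → ℕ} (h : HCTy cvTy opPar opAr Γ E C T) (hρ : Renames ρ Γ Δ) :
    HCTy cvTy opPar opAr Δ E (renC ρ C) T :=
  match h with
  | .app hV hW => .app (hV.renV hρ) (hW.renV hρ)
  | .ret hV => .ret (hV.renV hρ)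
  | .letin hC hB => .letin (hC.renC hρ) (hB.renC (hρ.upr _))
  | .opc hσ hV hC => .opc hσ (hV.renV hρ) (hC.renC (hρ.upr _))
  | .case hV hCs => .case (hV.renV hρ) (fun i => (hCs i).renC hρ)
  | .handle hC hCr hHop =>
      .handle (hC.renC hρ) (hCr.renC (hρ.upr _))
        (fun σ hσ => (hHop σ hσ).renC ((hρ.upr _).upr _))
end

end Renaming

end HEPCF

namespace P2H

open PCF HEPCF

abbrev VTy := HVTy cvTyU opParU opArU

abbrev CTy := HCTy cvTyU opParU opArU

/-- `H(C,D)` returns Church-encoded pairs `λp. p n b` of type `pairTy T`, where `n : ⟦Nat⟧` is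
a copy of the scrutinee and `b : Unit →_E ⟦T⟧` a thunk of the selected branch. -/
def selTy (T : PTy) : HTy Unit Unit :=
  .arr (trTy .nat) EU (.arr (.arr (.base ()) EU (trTy T)) EU (trTy T))

def pairTy (T : PTy) : HTy Unit Unit := .arr (selTy T) EU (trTy T)

theorem unit_typing {Γ : List (HTy Unit Unit)} : VTy Γ (.cv ()) (.base ()) := .cv ()

theorem Z_trTy_typing (T : PTy) {Γ : List (HTy Unit Unit)} : VTy Γ (Z (trTy T)) (trTy T) := by
  induction T generalizing Γ with
  | nat => exact .lam (.ret unit_typing)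
  | arr T U _ ihU => exact .lam (.ret ihU)

theorem sndSel_typing (T : PTy) {Γ : List (HTy Unit Unit)} : VTy Γ sndSel (selTy T) :=
  .lam (.ret (.lam (.app (.var rfl) unit_typing)))

theorem retClause_typing {Γ : List (HTy Unit Unit)} {tC : HComp Unit Unit} {T : PTy}
    (h : CTy Γ EU tC (trTy T)) : CTy (.base () :: Γ) EU (retClause tC) (pairTy T) :=
  .ret (.lam (.letin (.app (.var rfl) (.lam (.ret unit_typing)))
    (.app (.var rfl) (.lam (h.renC (renames_add_length [_, _, _, _] Γ))))))

theorem sigClause_typing {Γ : List (HTy Unit Unit)} {tD : HComp Unit Unit} {T : PTy}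
    (h : CTy (trTy .nat :: Γ) EU tD (trTy T)) :
    CTy (.arr (.enum 1) EU (pairTy T) :: .base () :: Γ) EU (sigClause T tD) (pairTy T) := by
  refine .letin (T := trTy .nat) (.ret (.lam (T := .base ()) ?pred)) (.ret (.lam (.letin
    (.app (.var rfl) (.lam (.opc (Set.mem_univ ()) unit_typing (.app (.var rfl) unit_typing))))
    (.app (.var rfl) (.lam (h.renC ?ren))))))
  case pred =>
    exact .letin (.letin (.app (.var rfl) (.num one_pos))
      (.app (.var rfl) (.lam (.ret (.lam
        (.letin (.app (.var rfl) unit_typing) (.ret (Z_trTy_typing T))))))))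
      (.ret unit_typing)
  case ren =>
    rintro (_ | m) U hm
    · simpa [trTy] using hm
    · simpa using hm

theorem trV_succ_typing {Γ : List (HTy Unit Unit)} {V : PVal} (h : VTy Γ (trV V) (trTy .nat)) :
    VTy Γ (trV (.succ V)) (trTy .nat) :=
  .lam (.opc (Set.mem_univ ()) unit_typing
    (.app (h.renV (renames_add_length [_, _] Γ)) unit_typing))

theorem trC_pcase_typing {Γ : List (HTy Unit Unit)} {V : PVal} {C D : PComp} {T : PTy}
    (hV : VTy Γ (trV V) (trTy .nat)) (hC : CTy Γ EU (trC C) (trTy T))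
    (hD : CTy (trTy .nat :: Γ) EU (trC D) (trTy T)) :
    CTy Γ EU (trC (.pcase T V C D)) (trTy T) :=
  .letin (.handle (E' := EU) (.app hV unit_typing) (retClause_typing hC)
      (fun _ _ => sigClause_typing hD))
    (.app (.var rfl) (sndSel_typing T))

mutual
theorem trV_typing {Γ : List PTy} {V : PVal} {T : PTy} (h : PVTy Γ V T) :
    VTy (Γ.map trTy) (trV V) (trTy T) :=
  match h with
  | .zero => .lam (.ret unit_typing)
  | .succ hV => trV_succ_typing (trV_typing hV)
  | .var hn => .var (by simp [hn])
  | .lam hC => .lam (trC_typing hC)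
  | .fixp hV => .fixv (trV_typing hV)

theorem trC_typing {Γ : List PTy} {C : PComp} {T : PTy} (h : PCTy Γ C T) :
    CTy (Γ.map trTy) EU (trC C) (trTy T) :=
  match h with
  | .app hV hW => .app (trV_typing hV) (trV_typing hW)
  | .ret hV => .ret (trV_typing hV)
  | .letin hC hB => .letin (trC_typing hC) (trC_typing hB)
  | .pcase hV hC hD => trC_pcase_typing (trV_typing hV) (trC_typing hC) (trC_typing hD)
end

end P2H

open PCF HEPCF P2H in
/-- The translation from PCF to HEPCF preserves typing: if `Γ ⊢ V : T` in
PCF then `⟦Γ⟧ ⊢ ⟦V⟧ : ⟦T⟧`, and if `Γ ⊢ C : T` then `⟦Γ⟧ ⊢_E ⟦C⟧ : ⟦T⟧`,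
where `E = {σ : Unit ⇝ 1}`. -/
theorem pcf_to_hepcf_typing :
    (∀ (Γ : List PTy) (V : PVal) (T : PTy), PVTy Γ V T →
      HVTy cvTyU opParU opArU (Γ.map trTy) (trV V) (trTy T)) ∧
    (∀ (Γ : List PTy) (C : PComp) (T : PTy), PCTy Γ C T →
      HCTy cvTyU opParU opArU (Γ.map trTy) EU (trC C) (trTy T)) :=
  ⟨fun _ _ _ => trV_typing, fun _ _ _ => trC_typing⟩
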